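/- For every positive integer x there exists a unique natural number k and a unique tuple (b_0, …, b_k) ∈ {0,1}^{k+1} such that x = Σ_{i=0}^k b_i·l̃_i, b_k = 1, b_0·b_2 = 0, and b_i·b_{i+1} = 0 for all i ∈ {0, …, k−1}. Moreover, this decomposition is minimal in the number of summands: if x = Σ_{i=0}^{k'} c_i·l̃_i for any k' ∈ ℕ and any tuple (c_0, …, c_{k'}) of natural numbers, then Σ_{i=0}^k b_i ≤ Σ_{i=0}^{k'} c_i. -/

import Mathlib

/-- The Lucas sequence: l 0 = 2, l 1 = 1, l (n+2) = l (n+1) + l n. -/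
def lucas : ℕ → ℕ
  | 0 => 2
  | 1 => 1
  | n + 2 => lucas (n + 1) + lucas n

/-- The modified (monotone) Lucas sequence: l̃ 0 = 1, l̃ 1 = 2, l̃ n = l n for n ≥ 2. -/
def ltil : ℕ → ℕ
  | 0 => 1
  | 1 => 2
  | n + 2 => lucas (n + 2)

/-- β x : minimal number of summands in a representation of x as a sum of
modified Lucas numbers (with repetitions allowed). -/
noncomputable def beta (x : ℕ) : ℕ :=
  sInf {s : ℕ | ∃ k : ℕ, ∃ b : ℕ → ℕ,
    x = ∑ i ∈ Finset.range (k + 1), b i * ltil i ∧ s = ∑ i ∈ Finset.range (k + 1), b i}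

/-- γ x : the greatest k with l̃ k ≤ x (for x ≥ 1). -/
noncomputable def gamma (x : ℕ) : ℕ := sSup {k : ℕ | ltil k ≤ x}

/-- S a : the additive submonoid of ℕ generated by {l_a} ∪ {l_a + l_n : n ∈ ℕ}. -/
def Sset (a : ℕ) : AddSubmonoid ℕ :=
  AddSubmonoid.closure ({lucas a} ∪ {x : ℕ | ∃ n : ℕ, x = lucas a + lucas n})

/-- T a : the additive submonoid of ℕ generated by {l_a + l_n : n ∈ ℕ}. -/
def Tset (a : ℕ) : AddSubmonoid ℕ :=
  AddSubmonoid.closure {x : ℕ | ∃ n : ℕ, x = lucas a + lucas n}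

/-!
The greedy choice of the largest `ltil k ≤ x` followed by recursion on `x - ltil k < ltil (k - 1)`
produces a representation with no two adjacent indices and not both `0` and `2`. Such a
representation with largest index `k` has value in `[ltil k, ltil (k + 1))`, whence uniqueness.
For minimality, the identities `2 l̃ᵢ = l̃ᵢ₊₁ + l̃ᵢ₋₂` and `l̃ᵢ + l̃ᵢ₊₁ = l̃ᵢ₊₂` (with variants for
small indices) rewrite any representation violating these conditions into one with no more
summands and a strictly larger sum of squares `∑ l̃ᵢ²`. That sum is bounded by `x²`, so the
rewriting ends in the unique normal representation.
-/

open Finset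

lemma lucas_pos : ∀ n, 0 < lucas n
  | 0 | 1 => by decide
  | n + 2 => Nat.add_pos_left (lucas_pos (n + 1)) _

lemma ltil_add_four (n : ℕ) : ltil (n + 4) = ltil (n + 3) + ltil (n + 2) := rfl

lemma ltil_pos : ∀ n, 0 < ltil n
  | 0 | 1 => by decide
  | n + 2 => lucas_pos (n + 2)

lemma ltil_lt_succ : ∀ n, ltil n < ltil (n + 1)
  | 0 | 1 | 2 => by decide
  | n + 3 => by rw [ltil_add_four]; exact Nat.lt_add_of_pos_right (ltil_pos _)

lemma lt_ltil : ∀ n, n < ltil n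
  | 0 => by decide
  | n + 1 => (lt_ltil n).succ_le.trans_lt (ltil_lt_succ n)

lemma ltil_succ_add_le {n : ℕ} (hn : n ≠ 1) : ltil (n + 1) + ltil n ≤ ltil (n + 2) := by
  rcases n with _ | _ | n
  exacts [by decide, absurd rfl hn, le_rfl]

def IsLucasRep (S : Finset ℕ) : Prop :=
  (∀ i ∈ S, i + 1 ∉ S) ∧ ¬(0 ∈ S ∧ 2 ∈ S)

lemma IsLucasRep.mono {S T : Finset ℕ} (hT : IsLucasRep T) (h : S ⊆ T) : IsLucasRep S :=
  ⟨fun i hi hi' => hT.1 i (h hi) (h hi'), fun h02 => hT.2 ⟨h h02.1, h h02.2⟩⟩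

lemma subset_range_of_notMem {S : Finset ℕ} {n : ℕ} (h : S ⊆ range (n + 1)) (hn : n ∉ S) :
    S ⊆ range n := by
  rwa [range_add_one, subset_insert_iff_of_notMem hn] at h

lemma IsLucasRep.sum_lt {n : ℕ} {S : Finset ℕ} (hS : IsLucasRep S) (h : S ⊆ range n) :
    ∑ i ∈ S, ltil i < ltil n := by
  induction n using Nat.strong_induction_on generalizing S with
  | _ n ih =>
  rcases n with _ | _ | n
  · simp_all [ltil_pos]
  · calc ∑ i ∈ S, ltil i ≤ ∑ i ∈ range 1, ltil i := sum_le_sum_of_subset h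
      _ < ltil 1 := by decide
  by_cases hn : n + 1 ∈ S
  · have hrest : S.erase (n + 1) ⊆ range n := by
      rw [range_add_one, subset_insert_iff] at h
      exact subset_range_of_notMem h fun h' => hS.1 n (mem_of_mem_erase h') hn
    rw [← add_sum_erase _ _ hn]
    by_cases h1 : n = 1
    · subst h1
      have : S.erase 2 = ∅ := subset_empty.1 <|
        subset_range_of_notMem hrest fun h0 => hS.2 ⟨mem_of_mem_erase h0, hn⟩
      simp only [this, sum_empty]; decide
    calc ltil (n + 1) + ∑ i ∈ S.erase (n + 1), ltil i < ltil (n + 1) + ltil n := by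
          gcongr; exact ih n (by omega) (hS.mono (erase_subset _ _)) hrest
      _ ≤ ltil (n + 2) := ltil_succ_add_le h1
  · exact (ih (n + 1) (by omega) hS (subset_range_of_notMem h hn)).trans (ltil_lt_succ _)

lemma IsLucasRep.sum_lt_sum {n : ℕ} {S T : Finset ℕ} (hS : IsLucasRep S) (hSn : S ⊆ range n)
    (hn : n ∈ T) : ∑ i ∈ S, ltil i < ∑ i ∈ T, ltil i :=
  (hS.sum_lt hSn).trans_le (single_le_sum (fun _ _ => Nat.zero_le _) hn)

lemma IsLucasRep.insert_of_subset_range {n : ℕ} {T : Finset ℕ} (hT : IsLucasRep T)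
    (h : T ⊆ range (n + 2)) : IsLucasRep (insert (n + 3) T) := by
  have hlt : ∀ i ∈ T, i < n + 2 := fun i hi => mem_range.1 (h hi)
  refine ⟨fun i hi hi' => ?_, fun h02 => hT.2 ?_⟩
  · simp only [mem_insert] at hi hi'
    rcases hi with rfl | hi
    · rcases hi' with h' | h'
      · omega
      · have := hlt _ h'; omega
    · rcases hi' with h' | h'
      · have := hlt _ hi; omega
      · exact hT.1 i hi h'
  · simpa using h02

lemma exists_isLucasRep_subset_range {n x : ℕ} (hx : x < ltil n) :
    ∃ S, IsLucasRep S ∧ S ⊆ range n ∧ ∑ i ∈ S, ltil i = x := by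
  induction n using Nat.strong_induction_on generalizing x with
  | _ n ih =>
  rcases n with _ | n
  · exact ⟨∅, by simp [IsLucasRep], empty_subset _, by simp_all [ltil]⟩
  rcases lt_or_ge x (ltil n) with hxn | hxn
  · obtain ⟨S, hS, hSn, rfl⟩ := ih n (by omega) hxn
    exact ⟨S, hS, hSn.trans (range_subset_range.2 n.le_succ), rfl⟩
  rcases Nat.lt_or_ge n 3 with hn | hn
  · have hsucc : ltil (n + 1) = ltil n + 1 := by interval_cases n <;> rfl
    refine ⟨{n}, ⟨by simp, by simp; omega⟩, by simp, by simp; omega⟩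
  obtain ⟨m, rfl⟩ : ∃ m, n = m + 3 := ⟨n - 3, by omega⟩
  obtain ⟨T, hT, hTm, hTx⟩ := ih (m + 2) (by omega) (x := x - ltil (m + 3)) (by
    change x < ltil (m + 4) at hx; rw [ltil_add_four] at hx; omega)
  have hmT : m + 3 ∉ T := fun h => by have := mem_range.1 (hTm h); omega
  refine ⟨insert (m + 3) T, hT.insert_of_subset_range hTm, ?_, ?_⟩
  · exact insert_subset (by simp) (hTm.trans (range_subset_range.2 (by omega)))
  · rw [sum_insert hmT, hTx]; omega

lemma IsLucasRep.eq_of_sum_eq {S T : Finset ℕ} (hS : IsLucasRep S) (hT : IsLucasRep T)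
    (h : ∑ i ∈ S, ltil i = ∑ i ∈ T, ltil i) : S = T := by
  obtain ⟨n, hn⟩ := exists_nat_subset_range (S ∪ T)
  induction n generalizing S T with
  | zero => simp_all
  | succ n ih =>
  have hSn : S ⊆ range (n + 1) := subset_union_left.trans hn
  have hTn : T ⊆ range (n + 1) := subset_union_right.trans hn
  by_cases hnS : n ∈ S <;> by_cases hnT : n ∈ T
  · have hn' : S.erase n ∪ T.erase n ⊆ range n := by
      rwa [← erase_union_distrib, ← subset_insert_iff, ← range_add_one]
    rw [← insert_erase hnS, ← insert_erase hnT,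
      ih (hS.mono (erase_subset _ _)) (hT.mono (erase_subset _ _)) _ hn']
    rw [← add_sum_erase _ _ hnS, ← add_sum_erase _ _ hnT] at h
    omega
  · exact absurd h (hT.sum_lt_sum (subset_range_of_notMem hTn hnT) hnS).ne'
  · exact absurd h (hS.sum_lt_sum (subset_range_of_notMem hSn hnS) hnT).ne
  · exact ih hS hT h (subset_range_of_notMem hn (by simp [hnS, hnT]))

lemma Multiset.sum_map_sq_le {ι : Type*} (s : Multiset ι) (f : ι → ℕ) :
    (s.map fun i => f i ^ 2).sum ≤ (s.map f).sum ^ 2 := by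
  induction s using Multiset.induction_on with
  | empty => simp
  | cons a s ih =>
    simp only [Multiset.map_cons, Multiset.sum_cons]
    nlinarith [Nat.zero_le (f a * (s.map f).sum)]

def IsReduciblePair (i j : ℕ) : Prop :=
  i = j ∨ j = i + 1 ∨ (i = 0 ∧ j = 2)

lemma exists_cons_cons_of_not_isLucasRep {s : Multiset ℕ}
    (h : ¬(s.Nodup ∧ IsLucasRep s.toFinset)) :
    ∃ i j r, s = i ::ₘ j ::ₘ r ∧ IsReduciblePair i j := by
  have cons_cons : ∀ {i j}, i ∈ s → j ∈ s → i ≠ j → ∃ r, s = i ::ₘ j ::ₘ r := fun hi hj hij => by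
    obtain ⟨t, rfl⟩ := Multiset.exists_cons_of_mem hi
    obtain ⟨r, rfl⟩ := Multiset.exists_cons_of_mem ((Multiset.mem_cons.1 hj).resolve_left hij.symm)
    exact ⟨r, rfl⟩
  contrapose! h
  refine ⟨Multiset.nodup_iff_ne_cons_cons.2 fun i r hs => h i i r hs (Or.inl rfl),
    fun i hi hi' => ?_, fun ⟨h0, h2⟩ => ?_⟩ <;> simp only [Multiset.mem_toFinset] at *
  · obtain ⟨r, hr⟩ := cons_cons hi hi' (by omega)
    exact h _ _ r hr (Or.inr (Or.inl rfl))
  · obtain ⟨r, hr⟩ := cons_cons h0 h2 (by omega)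
    exact h _ _ r hr (Or.inr (Or.inr ⟨rfl, rfl⟩))

lemma IsReduciblePair.exists_replacement {i j : ℕ} (h : IsReduciblePair i j) :
    ∃ e : Multiset ℕ, Multiset.card e ≤ 2 ∧ (e.map ltil).sum = ltil i + ltil j ∧
      ltil i ^ 2 + ltil j ^ 2 < (e.map fun k => ltil k ^ 2).sum := by
  rcases h with rfl | rfl | ⟨rfl, rfl⟩
  · match i with
    | 0 => exact ⟨{1}, by decide⟩
    | 1 => exact ⟨{3}, by decide⟩
    | 2 => exact ⟨{3, 1}, by decide⟩
    | 3 => exact ⟨{4, 0}, by decide⟩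
    | n + 4 =>
      refine ⟨{n + 5, n + 2}, by simp, ?_, ?_⟩ <;>
        simp only [Multiset.insert_eq_cons, Multiset.map_cons, Multiset.map_singleton,
          Multiset.sum_cons, Multiset.sum_singleton, ltil_add_four (n + 1), ltil_add_four n]
      · ring
      · nlinarith [ltil_pos (n + 2), ltil_pos (n + 3)]
  · match i with
    | 0 => exact ⟨{2}, by decide⟩
    | 1 => exact ⟨{3, 0}, by decide⟩
    | n + 2 =>
      refine ⟨{n + 4}, by simp, ?_, ?_⟩ <;>
        simp only [Multiset.map_singleton, Multiset.sum_singleton, ltil_add_four n]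
      · ring
      · nlinarith [ltil_pos (n + 2), ltil_pos (n + 3)]
  · exact ⟨{3}, by decide⟩

lemma exists_isLucasRep_card_le (s : Multiset ℕ) :
    ∃ S, IsLucasRep S ∧ ∑ i ∈ S, ltil i = (s.map ltil).sum ∧ S.card ≤ Multiset.card s := by
  -- Each rewrite of a reducible pair keeps the value, does not add summands and strictly increases
  -- the sum of squares, which stays below the square of the value.
  induction hs : (s.map ltil).sum ^ 2 - (s.map fun i => ltil i ^ 2).sum
    using Nat.strong_induction_on generalizing s with
  | _ n ih =>
  by_cases hnf : s.Nodup ∧ IsLucasRep s.toFinset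
  · refine ⟨s.toFinset, hnf.2, ?_, (Multiset.toFinset_card_of_nodup hnf.1).le⟩
    rw [sum_eq_multiset_sum, Multiset.toFinset_val, hnf.1.dedup]
  obtain ⟨i, j, r, rfl, hij⟩ := exists_cons_cons_of_not_isLucasRep hnf
  obtain ⟨e, he, hval, hsq⟩ := hij.exists_replacement
  have hsum : ((e + r).map ltil).sum = ((i ::ₘ j ::ₘ r).map ltil).sum := by
    simp [hval, add_assoc]
  have hsq_lt : ((i ::ₘ j ::ₘ r).map fun k => ltil k ^ 2).sum <
      ((e + r).map fun k => ltil k ^ 2).sum := by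
    simp only [Multiset.map_add, Multiset.map_cons, Multiset.sum_add, Multiset.sum_cons]; omega
  have hsq_le := Multiset.sum_map_sq_le (e + r) ltil
  rw [hsum] at hsq_le
  obtain ⟨S, hS, hSs, hcard⟩ := ih _ (by rw [← hs, hsum]; omega) (e + r) rfl
  refine ⟨S, hS, hSs.trans hsum, hcard.trans ?_⟩
  simp only [Multiset.card_add, Multiset.card_cons]; omega

lemma exists_isLucasRep_card_le_sum (n : ℕ) (c : ℕ → ℕ) :
    ∃ S, IsLucasRep S ∧ ∑ i ∈ S, ltil i = ∑ i ∈ range n, c i * ltil i ∧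
      S.card ≤ ∑ i ∈ range n, c i := by
  have hval : ((∑ i ∈ range n, c i • ({i} : Multiset ℕ)).map ltil).sum =
      ∑ i ∈ range n, c i * ltil i := by
    rw [← Multiset.coe_mapAddMonoidHom, map_sum, ← Multiset.coe_sumAddMonoidHom, map_sum]
    simp [Multiset.map_nsmul, Multiset.sum_nsmul]
  simpa [hval] using exists_isLucasRep_card_le (∑ i ∈ range n, c i • {i})

def IsLucasDigits (k : ℕ) (b : ℕ → ℕ) : Prop :=
  (∀ i, b i ≤ 1) ∧ (∀ i, k < i → b i = 0) ∧ b k = 1 ∧ b 0 * b 2 = 0 ∧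
    ∀ i < k, b i * b (i + 1) = 0

lemma IsLucasRep.isLucasDigits {S : Finset ℕ} (hS : IsLucasRep S) (hne : S.Nonempty) :
    IsLucasDigits (S.max' hne) ((S : Set ℕ).indicator 1) := by
  refine ⟨fun i => ?_, fun i hi => ?_, ?_, ?_, fun i _ => ?_⟩
  · by_cases h : i ∈ S <;> simp [h]
  · simpa using fun h => (S.le_max' i h).not_gt hi
  · simp [S.max'_mem hne]
  · by_cases h : 0 ∈ S <;> simp_all [IsLucasRep]
  · by_cases h : i ∈ S <;> simp_all [IsLucasRep]

lemma IsLucasDigits.exists_eq_indicator {k : ℕ} {b : ℕ → ℕ} (h : IsLucasDigits k b) :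
    ∃ T, IsLucasRep T ∧ T ⊆ range (k + 1) ∧ b = (T : Set ℕ).indicator 1 := by
  obtain ⟨hle, hzero, -, h02, hadj⟩ := h
  refine ⟨(range (k + 1)).filter (b · = 1), ⟨fun i hi hi' => ?_, fun ⟨h0, h2⟩ => ?_⟩,
    filter_subset _ _, funext fun i => ?_⟩
  · simp only [mem_filter, mem_range] at hi hi'
    simpa [hi.2, hi'.2] using hadj i (by omega)
  · simp only [mem_filter] at h0 h2
    simp [h0.2, h2.2] at h02
  · by_cases hi : i ≤ k
    · have := hle i
      by_cases hb : b i = 1 <;> simp [hb, hi]; omega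
    · simp [hzero i (by omega)]

lemma IsLucasDigits.top_unique {k k' : ℕ} {b : ℕ → ℕ} (h : IsLucasDigits k b)
    (h' : IsLucasDigits k' b) : k = k' := by
  by_contra hne
  rcases Nat.lt_or_gt_of_ne hne with hlt | hlt
  · simpa [h'.2.2.1] using h.2.1 k' hlt
  · simpa [h.2.2.1] using h'.2.1 k hlt

lemma sum_range_indicator_mul {n : ℕ} {S : Finset ℕ} (h : S ⊆ range n) (f : ℕ → ℕ) :
    ∑ i ∈ range n, (S : Set ℕ).indicator 1 i * f i = ∑ i ∈ S, f i := by
  rw [← sum_indicator_subset f h]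
  refine sum_congr rfl fun i _ => ?_
  by_cases hi : i ∈ S <;> simp [hi]

lemma sum_range_indicator_one {n : ℕ} {S : Finset ℕ} (h : S ⊆ range n) :
    ∑ i ∈ range n, (S : Set ℕ).indicator 1 i = S.card := by
  simp [sum_indicator_subset _ h]

theorem zeckendorf_lucas (x : ℕ) (hx : 0 < x) :
    ∃ k : ℕ, ∃ b : ℕ → ℕ,
      ((∀ i, b i ≤ 1) ∧ (∀ i, k < i → b i = 0) ∧ b k = 1 ∧ b 0 * b 2 = 0 ∧
        (∀ i < k, b i * b (i + 1) = 0) ∧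
        x = ∑ i ∈ Finset.range (k + 1), b i * ltil i) ∧
      (∀ k' : ℕ, ∀ c : ℕ → ℕ, x = ∑ i ∈ Finset.range (k' + 1), c i * ltil i →
        ∑ i ∈ Finset.range (k + 1), b i ≤ ∑ i ∈ Finset.range (k' + 1), c i) ∧
      (∀ k' : ℕ, ∀ b' : ℕ → ℕ,
        (∀ i, b' i ≤ 1) → (∀ i, k' < i → b' i = 0) → b' k' = 1 → b' 0 * b' 2 = 0 →
        (∀ i < k', b' i * b' (i + 1) = 0) →
        x = ∑ i ∈ Finset.range (k' + 1), b' i * ltil i →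
        k' = k ∧ b' = b) := by
  obtain ⟨S, hS, -, hSx⟩ := exists_isLucasRep_subset_range (lt_ltil x)
  have hne : S.Nonempty := nonempty_of_sum_ne_zero (hSx ▸ hx.ne')
  have hSk : S ⊆ range (S.max' hne + 1) := fun i hi =>
    mem_range.2 (Nat.lt_succ_of_le (S.le_max' i hi))
  have hdig := hS.isLucasDigits hne
  refine ⟨S.max' hne, _, ⟨hdig.1, hdig.2.1, hdig.2.2.1, hdig.2.2.2.1, hdig.2.2.2.2, ?_⟩, ?_, ?_⟩
  · rw [sum_range_indicator_mul hSk, hSx]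
  · intro k' c hc
    obtain ⟨T, hT, hTx, hTc⟩ := exists_isLucasRep_card_le_sum (k' + 1) c
    obtain rfl : S = T := hS.eq_of_sum_eq hT (hSx.trans (hc.trans hTx.symm))
    exact (sum_range_indicator_one hSk).trans_le hTc
  · intro k' b' h1 h2 h3 h4 h5 hb'
    have hdig' : IsLucasDigits k' b' := ⟨h1, h2, h3, h4, h5⟩
    obtain ⟨T, hT, hTk, rfl⟩ := hdig'.exists_eq_indicator
    obtain rfl : T = S := hT.eq_of_sum_eq hS (by rw [← sum_range_indicator_mul hTk, ← hb', hSx])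
    exact ⟨hdig'.top_unique hdig, rfl⟩
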